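/- Let M be a module over a commutative ring with submodules J₁,…,Jₙ satisfying ⋂ᵢ Jᵢ = {0}, and suppose the canonical map κ : M → M^c (as above) is surjective. Then for every k, ⋂_{i≠k}(Jᵢ + J_k) = (⋂_{i≠k} Jᵢ) + J_k. -/

import Mathlib

/-!
Given `x ∈ J i ⊔ J k` for all `i ≠ k`, the family that is `0` at `k` and the class of `x`
elsewhere is compatible. A lift `m` of it lies in `J k`, and `x - m` lies in every `J i` with
`i ≠ k`, so `x = (x - m) + m` splits as required.
-/

open Submodule

namespace Submodule

variable {K M ι : Type*} [CommRing K] [AddCommGroup M] [Module K M]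

/-- Surjectivity of the canonical map `κ : M → Mᶜ` onto the compatible families. -/
def HasCompatibleLifts (J : ι → Submodule K M) : Prop :=
  ∀ f : ∀ i : ι, M ⧸ J i,
    (∀ i j : ι,
      (J i).mapQ (J i ⊔ J j) LinearMap.id (by rw [comap_id]; exact le_sup_left) (f i) =
        (J j).mapQ (J i ⊔ J j) LinearMap.id (by rw [comap_id]; exact le_sup_right) (f j)) →
    ∃ m : M, ∀ i : ι, (Quotient.mk m : M ⧸ J i) = f i

theorem mapQ_id_mk_eq_mapQ_id_mk_iff {p q r : Submodule K M} (hp : p ≤ r.comap LinearMap.id)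
    (hq : q ≤ r.comap LinearMap.id) {x y : M} :
    p.mapQ r LinearMap.id hp (Quotient.mk x) = q.mapQ r LinearMap.id hq (Quotient.mk y) ↔
      x - y ∈ r :=
  Quotient.eq r

theorem exists_mem_forall_sub_mem_of_hasCompatibleLifts {J : ι → Submodule K M}
    (hJ : HasCompatibleLifts J) {k : ι} {x : M} (hx : ∀ i ≠ k, x ∈ J i ⊔ J k) :
    ∃ m ∈ J k, ∀ i ≠ k, x - m ∈ J i := by
  classical
  let y : ι → M := fun i => if i = k then 0 else x
  have hy : ∀ i j, y i - y j ∈ J i ⊔ J j := by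
    intro i j
    by_cases hi : i = k <;> by_cases hj : j = k
    · simp [y, hi, hj]
    · subst hi
      simpa [y, hj, sup_comm] using hx j hj
    · subst hj
      simpa [y, hi] using hx i hi
    · simp [y, hi, hj]
  obtain ⟨m, hm⟩ := hJ (fun i => Quotient.mk (y i)) fun i j =>
    (mapQ_id_mk_eq_mapQ_id_mk_iff _ _).2 (hy i j)
  refine ⟨m, by simpa [y] using (Quotient.eq _).1 (hm k), fun i hi => ?_⟩
  exact sub_mem_comm_iff.1 (by simpa [y, hi] using (Quotient.eq _).1 (hm i))

end Submodule

/-- If `(Jᵢ)` is a complete covering of `M` (the intersection is zero and the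
canonical map to the covering completion is surjective), then for every `k`,
`⋂_{i≠k}(Jᵢ + J_k) = (⋂_{i≠k} Jᵢ) + J_k`. -/
theorem complete_covering_necessary_condition
    {K M ι : Type*} [CommRing K] [AddCommGroup M] [Module K M]
    (J : ι → Submodule K M)
    (hsurj : ∀ f : ∀ i : ι, M ⧸ J i,
      (∀ i j : ι,
        Submodule.mapQ (J i) (J i ⊔ J j) LinearMap.id
            (by rw [Submodule.comap_id]; exact le_sup_left) (f i) =
          Submodule.mapQ (J j) (J i ⊔ J j) LinearMap.id
            (by rw [Submodule.comap_id]; exact le_sup_right) (f j)) →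
      ∃ m : M, ∀ i : ι, (Submodule.Quotient.mk m : M ⧸ J i) = f i) :
    ∀ k : ι,
      (⨅ i : ι, ⨅ _ : i ≠ k, (J i ⊔ J k)) =
        (⨅ i : ι, ⨅ _ : i ≠ k, J i) ⊔ J k := by
  intro k
  refine le_antisymm (fun x hx => ?_)
    ((iInf_sup_le_iInf_sup _ _).trans (iInf_mono fun i => iInf_sup_le_iInf_sup _ _))
  obtain ⟨m, hmk, hxm⟩ := exists_mem_forall_sub_mem_of_hasCompatibleLifts hsurj
    fun i hi => (mem_iInf _).1 ((mem_iInf _).1 hx i) hi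
  rw [← sub_add_cancel x m]
  exact add_mem_sup ((mem_iInf _).2 fun i => (mem_iInf _).2 (hxm i)) hmk
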